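/- Let F : ℝ → ℂ be square-integrable and let 0 < H ≤ X. Then ∫_X^{2X} |F(x+H) − F(x)|² dx ≪ sup_{θ ∈ [H/(3X), 3H/X]} ∫_X^{3X} |F(u + θu) − F(u)|² du, with an absolute implied constant. -/

import Mathlib

/-!
Average the triangle inequality
`‖F(x+H) - F x‖² ≤ 2‖F(x+H) - F(x+θx)‖² + 2‖F(x+θx) - F x‖²`
over `θ ∈ (11H/6X, 13H/6X]`, a window of length `H/3X`. The second term is a dilation integral.
In the first, for fixed `x` the substitution `x + θx = (x+H) + φ(x+H)` carries the θ-window into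
`φ ∈ [H/3X, 3H/X]` at the cost of the Jacobian `(x+H)/x ≤ 2`; after Tonelli, each `φ` contributes a
dilation integral over `x + H ∈ (X, 3X]`, and the φ-window has length `8 · H/3X`. This gives the
constant `2 + 2 · 2 · 8 = 34`.

The argument runs in `ℝ≥0∞` for a strongly measurable representative of `F`. Square-integrability
bounds every dilation integral by `4 ‖F‖₂²`, so the real supremum is a genuine supremum and not the
junk value of an unbounded `⨆`.
-/

open MeasureTheory Set ENNReal

section

variable {E : Type*} [NormedAddCommGroup E]

lemma enorm_sub_sq_le (a b c : E) :
    ‖a - b‖ₑ ^ 2 ≤ 2 * ‖a - c‖ₑ ^ 2 + 2 * ‖c - b‖ₑ ^ 2 := by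
  have h : ‖a - b‖₊ ^ 2 ≤ 2 * ‖a - c‖₊ ^ 2 + 2 * ‖c - b‖₊ ^ 2 :=
    calc ‖a - b‖₊ ^ 2 ≤ (‖a - c‖₊ + ‖c - b‖₊) ^ 2 := by
          gcongr
          simpa using nnnorm_add_le (a - c) (c - b)
      _ ≤ 2 * (‖a - c‖₊ ^ 2 + ‖c - b‖₊ ^ 2) := add_sq_le
      _ = _ := mul_add _ _ _
  simpa [enorm] using (ENNReal.coe_le_coe.mpr h)

lemma lintegral_enorm_sub_sq_le {α : Type*} [MeasurableSpace α] {μ : Measure α} {f g h : α → E}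
    (hf : AEStronglyMeasurable f μ) (hh : AEStronglyMeasurable h μ) :
    ∫⁻ x, ‖f x - g x‖ₑ ^ 2 ∂μ
      ≤ 2 * ∫⁻ x, ‖f x - h x‖ₑ ^ 2 ∂μ + 2 * ∫⁻ x, ‖h x - g x‖ₑ ^ 2 ∂μ := by
  rw [← lintegral_const_mul' _ _ ofNat_ne_top, ← lintegral_const_mul' _ _ ofNat_ne_top,
    ← lintegral_add_left' (f := fun x => 2 * ‖f x - h x‖ₑ ^ 2)
      (((hf.sub hh).enorm.pow_const 2).const_mul 2)]
  exact lintegral_mono fun x => enorm_sub_sq_le _ _ _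

lemma MeasureTheory.StronglyMeasurable.measurable_enorm_comp_sub_comp_sq {α : Type*}
    [MeasurableSpace α] {G : ℝ → E} (hG : StronglyMeasurable G) {f g : α → ℝ} (hf : Measurable f)
    (hg : Measurable g) :
    Measurable fun p => ‖G (f p) - G (g p)‖ₑ ^ 2 :=
  ((hG.comp_measurable hf).sub (hG.comp_measurable hg)).enorm.pow_const 2

lemma setLIntegral_affine_Ioc (g : ℝ → ℝ≥0∞) {k : ℝ} (hk : 0 < k) (m a b : ℝ) :
    ∫⁻ v in Ioc (k * a + m) (k * b + m), g v
      = ENNReal.ofReal k * ∫⁻ t in Ioc a b, g (k * t + m) := by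
  rw [← image_affine_Ioc hk, lintegral_image_eq_lintegral_abs_deriv_mul (f' := fun _ => k)
    measurableSet_Ioc
    (fun t _ => (by simpa using ((hasDerivAt_id t).const_mul k).add_const m :
      HasDerivAt (fun t => k * t + m) k t).hasDerivWithinAt)
    (fun s _ t _ h => by simpa [hk.ne'] using h), abs_of_pos hk,
    lintegral_const_mul' _ _ ofReal_ne_top]

lemma setLIntegral_comp_add_right_Ioc (g : ℝ → ℝ≥0∞) (m a b : ℝ) :
    ∫⁻ t in Ioc a b, g (t + m) = ∫⁻ v in Ioc (a + m) (b + m), g v := by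
  simpa using (setLIntegral_affine_Ioc g one_pos m a b).symm

lemma setLIntegral_comp_mul_le_lintegral (g : ℝ → ℝ≥0∞) {k : ℝ} (hk : 1 ≤ k) (a b : ℝ) :
    ∫⁻ t in Ioc a b, g (k * t) ≤ ∫⁻ v, g v :=
  calc ∫⁻ t in Ioc a b, g (k * t)
      ≤ ENNReal.ofReal k * ∫⁻ t in Ioc a b, g (k * t + 0) := by
        simpa using le_mul_of_one_le_left zero_le (one_le_ofReal.mpr hk)
    _ = ∫⁻ v in Ioc (k * a + 0) (k * b + 0), g v :=
        (setLIntegral_affine_Ioc g (one_pos.trans_le hk) 0 a b).symm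
    _ ≤ ∫⁻ v, g v := setLIntegral_le_lintegral _ _

/-- Both integrals are over windows in `v = x + θ x = y + φ y`; the hypotheses nest the windows. -/
lemma setLIntegral_comp_dilation_le (g : ℝ → ℝ≥0∞) {x y a b c d : ℝ} (hx : 0 < x) (hy : 0 < y)
    (hca : y * c + y ≤ x * a + x) (hbd : x * b + x ≤ y * d + y) :
    ∫⁻ θ in Ioc a b, g (x + θ * x) ≤ ENNReal.ofReal (y / x) * ∫⁻ φ in Ioc c d, g (y + φ * y) := by
  have key : ENNReal.ofReal x * ∫⁻ θ in Ioc a b, g (x + θ * x)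
      ≤ ENNReal.ofReal y * ∫⁻ φ in Ioc c d, g (y + φ * y) := by
    simp_rw [add_comm _ (_ * x), add_comm _ (_ * y), mul_comm _ x, mul_comm _ y,
      ← setLIntegral_affine_Ioc _ hx, ← setLIntegral_affine_Ioc _ hy]
    exact lintegral_mono_set (Ioc_subset_Ioc hca hbd)
  calc ∫⁻ θ in Ioc a b, g (x + θ * x)
      = ENNReal.ofReal x⁻¹ * (ENNReal.ofReal x * ∫⁻ θ in Ioc a b, g (x + θ * x)) := by
        rw [← mul_assoc, ← ofReal_mul (inv_nonneg.mpr hx.le), inv_mul_cancel₀ hx.ne', ofReal_one,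
          one_mul]
    _ ≤ ENNReal.ofReal x⁻¹ * (ENNReal.ofReal y * ∫⁻ φ in Ioc c d, g (y + φ * y)) := by gcongr
    _ = ENNReal.ofReal (y / x) * ∫⁻ φ in Ioc c d, g (y + φ * y) := by
        rw [← mul_assoc, ← ofReal_mul (inv_nonneg.mpr hx.le), div_eq_inv_mul]

lemma ENNReal.toReal_biSup {ι : Type*} {f : ι → ℝ≥0∞} {s : Set ι} (hf : ∀ i ∈ s, f i ≠ ∞) :
    (⨆ i ∈ s, f i).toReal = ⨆ i ∈ s, (f i).toReal := by
  have hf' : ∀ i, ⨆ _ : i ∈ s, f i ≠ ∞ := fun i => by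
    by_cases hi : i ∈ s <;> simp [hi, hf]
  rw [toReal_iSup hf']
  exact iSup_congr fun i => by by_cases hi : i ∈ s <;> simp [hi]

lemma intervalIntegral_norm_sq_eq_toReal {f : ℝ → E} (hf : AEStronglyMeasurable f) {a b : ℝ}
    (hab : a ≤ b) :
    ∫ x in a..b, ‖f x‖ ^ 2 = (∫⁻ x in Ioc a b, ‖f x‖ₑ ^ 2).toReal := by
  rw [intervalIntegral.integral_of_le hab, ← integral_toReal]
  · simp
  · exact (hf.enorm.pow_const 2).restrict
  · exact Filter.Eventually.of_forall fun x => by simp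

lemma MeasureTheory.MemLp.lintegral_enorm_sq_ne_top {α : Type*} [MeasurableSpace α] {μ : Measure α}
    {G : α → E} (hG : MemLp G 2 μ) : ∫⁻ v, ‖G v‖ₑ ^ 2 ∂μ ≠ ∞ := by
  simpa [HasFiniteIntegral] using (hG.integrable_norm_pow two_ne_zero).hasFiniteIntegral.ne

lemma setLIntegral_dilation_sub_le_four_mul {G : ℝ → E} (hG : StronglyMeasurable G) {θ : ℝ}
    (hθ : 0 ≤ θ) (a b : ℝ) :
    ∫⁻ u in Ioc a b, ‖G (u + θ * u) - G u‖ₑ ^ 2 ≤ 4 * ∫⁻ v, ‖G v‖ₑ ^ 2 := by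
  have hdil : ∀ u, u + θ * u = (1 + θ) * u := fun u => by ring
  calc ∫⁻ u in Ioc a b, ‖G (u + θ * u) - G u‖ₑ ^ 2
      ≤ 2 * (∫⁻ u in Ioc a b, ‖G ((1 + θ) * u) - 0‖ₑ ^ 2)
          + 2 * ∫⁻ u in Ioc a b, ‖0 - G u‖ₑ ^ 2 := by
        simp_rw [hdil]
        exact lintegral_enorm_sub_sq_le (f := fun u => G ((1 + θ) * u))
          (hG.comp_measurable (measurable_const_mul _)).aestronglyMeasurable
          aestronglyMeasurable_const
    _ ≤ 2 * (∫⁻ v, ‖G v‖ₑ ^ 2) + 2 * ∫⁻ v, ‖G v‖ₑ ^ 2 := by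
        simp only [sub_zero, zero_sub, enorm_neg]
        gcongr 2 * ?_ + 2 * ?_
        · exact setLIntegral_comp_mul_le_lintegral (fun v => ‖G v‖ₑ ^ 2) (by linarith) a b
        · exact setLIntegral_le_lintegral _ _
    _ = 4 * ∫⁻ v, ‖G v‖ₑ ^ 2 := by ring

section ShiftToDilation

variable {G : ℝ → E} {X H : ℝ}

lemma setLIntegral_shift_sub_dilation_le (hH : 0 < H) (hHX : H ≤ X) {x : ℝ}
    (hx : x ∈ Ioc X (2 * X)) :
    ∫⁻ θ in Ioc (11 * H / (6 * X)) (13 * H / (6 * X)), ‖G (x + H) - G (x + θ * x)‖ₑ ^ 2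
      ≤ 2 * ∫⁻ φ in Ioc (H / (3 * X)) (3 * H / X), ‖G (x + H) - G (x + H + φ * (x + H))‖ₑ ^ 2 := by
  have hX : 0 < X := hH.trans_le hHX
  obtain ⟨hXx, hx2X⟩ := hx
  have hx0 : 0 < x := hX.trans hXx
  calc _ ≤ ENNReal.ofReal ((x + H) / x)
        * ∫⁻ φ in Ioc (H / (3 * X)) (3 * H / X), ‖G (x + H) - G (x + H + φ * (x + H))‖ₑ ^ 2 := by
        refine setLIntegral_comp_dilation_le (fun v => ‖G (x + H) - G v‖ₑ ^ 2) hx0 (by positivity)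
          ?_ ?_
        · rw [← sub_nonneg]
          have e : x * (11 * H / (6 * X)) + x - ((x + H) * (H / (3 * X)) + (x + H))
              = H * (9 * x - 2 * H - 6 * X) / (6 * X) := by field_simp; ring
          rw [e]; apply div_nonneg (mul_nonneg hH.le (by linarith)) (by positivity)
        · rw [← sub_nonneg]
          have e : (x + H) * (3 * H / X) + (x + H) - (x * (13 * H / (6 * X)) + x)
              = H * (5 * x + 18 * H + 6 * X) / (6 * X) := by field_simp; ring
          rw [e]; positivity
    _ ≤ _ := by
        gcongr
        rw [← ofReal_ofNat]
        exact ofReal_le_ofReal ((div_le_iff₀ hx0).mpr (by linarith))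

lemma setLIntegral_setLIntegral_shift_sub_dilation_le (hG : StronglyMeasurable G) (hH : 0 < H)
    (hHX : H ≤ X) {s : ℝ≥0∞}
    (hs : ∀ φ ∈ Icc (H / (3 * X)) (3 * H / X),
      ∫⁻ u in Ioc X (3 * X), ‖G (u + φ * u) - G u‖ₑ ^ 2 ≤ s) :
    ∫⁻ θ in Ioc (11 * H / (6 * X)) (13 * H / (6 * X)),
        ∫⁻ x in Ioc X (2 * X), ‖G (x + H) - G (x + θ * x)‖ₑ ^ 2
      ≤ 2 * (ENNReal.ofReal (3 * H / X - H / (3 * X)) * s) := by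
  rw [lintegral_lintegral_swap
    (hG.measurable_enorm_comp_sub_comp_sq (by fun_prop) (by fun_prop)).aemeasurable]
  calc _ ≤ ∫⁻ x in Ioc X (2 * X), 2 * ∫⁻ φ in Ioc (H / (3 * X)) (3 * H / X),
          ‖G (x + H) - G (x + H + φ * (x + H))‖ₑ ^ 2 :=
        setLIntegral_mono' measurableSet_Ioc fun _ hx =>
          setLIntegral_shift_sub_dilation_le hH hHX hx
    _ = 2 * ∫⁻ φ in Ioc (H / (3 * X)) (3 * H / X), ∫⁻ x in Ioc X (2 * X),
          ‖G (x + H + φ * (x + H)) - G (x + H)‖ₑ ^ 2 := by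
        simp_rw [enorm_sub_rev (G (_ + H))]
        rw [lintegral_const_mul' _ _ ofNat_ne_top, lintegral_lintegral_swap
          (hG.measurable_enorm_comp_sub_comp_sq (by fun_prop) (by fun_prop)).aemeasurable]
    _ ≤ 2 * ∫⁻ φ in Ioc (H / (3 * X)) (3 * H / X), s := by
        gcongr 2 * ?_
        refine setLIntegral_mono' measurableSet_Ioc fun φ hφ => ?_
        rw [setLIntegral_comp_add_right_Ioc (fun v => ‖G (v + φ * v) - G v‖ₑ ^ 2)]
        exact (lintegral_mono_set (Ioc_subset_Ioc (by linarith) (by linarith))).trans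
          (hs φ (Ioc_subset_Icc_self hφ))
    _ = 2 * (ENNReal.ofReal (3 * H / X - H / (3 * X)) * s) := by
        rw [setLIntegral_const, Real.volume_Ioc, mul_comm s]

lemma setLIntegral_shift_le_of_dilation_le (hG : StronglyMeasurable G) (hH : 0 < H) (hHX : H ≤ X)
    {s : ℝ≥0∞}
    (hs : ∀ φ ∈ Icc (H / (3 * X)) (3 * H / X),
      ∫⁻ u in Ioc X (3 * X), ‖G (u + φ * u) - G u‖ₑ ^ 2 ≤ s) :
    ∫⁻ x in Ioc X (2 * X), ‖G (x + H) - G x‖ₑ ^ 2 ≤ 34 * s := by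
  have hX : 0 < X := hH.trans_le hHX
  set J := Ioc (11 * H / (6 * X)) (13 * H / (6 * X))
  set δ := ENNReal.ofReal (H / (3 * X))
  have hJ : volume J = δ := by
    rw [Real.volume_Ioc]; congr 1; field_simp; ring
  have hdc : ENNReal.ofReal (3 * H / X - H / (3 * X)) = 8 * δ := by
    rw [show 3 * H / X - H / (3 * X) = 8 * (H / (3 * X)) by field_simp; ring,
      ofReal_mul (by norm_num), ofReal_ofNat]
  have hJc : J ⊆ Icc (H / (3 * X)) (3 * H / X) := by
    refine Ioc_subset_Icc_self.trans (Icc_subset_Icc ?_ ?_) <;>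
      rw [div_le_div_iff₀ (by positivity) (by positivity)] <;> nlinarith
  have hpt : ∀ θ ∈ J, ∫⁻ x in Ioc X (2 * X), ‖G (x + H) - G x‖ₑ ^ 2
      ≤ 2 * (∫⁻ x in Ioc X (2 * X), ‖G (x + H) - G (x + θ * x)‖ₑ ^ 2) + 2 * s := fun θ hθ =>
    calc _ ≤ 2 * (∫⁻ x in Ioc X (2 * X), ‖G (x + H) - G (x + θ * x)‖ₑ ^ 2)
          + 2 * ∫⁻ x in Ioc X (2 * X), ‖G (x + θ * x) - G x‖ₑ ^ 2 :=
          lintegral_enorm_sub_sq_le (f := fun x => G (x + H)) (h := fun x => G (x + θ * x))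
            (hG.comp_measurable (by fun_prop)).aestronglyMeasurable
            (hG.comp_measurable (by fun_prop)).aestronglyMeasurable
      _ ≤ _ := by
          gcongr 2 * _ + 2 * ?_
          exact (lintegral_mono_set (Ioc_subset_Ioc_right (by linarith))).trans (hs θ (hJc hθ))
  refine (ENNReal.mul_le_mul_iff_right (a := δ) ?_ ofReal_ne_top).mp ?_
  · exact (ofReal_pos.mpr (by positivity)).ne'
  calc δ * ∫⁻ x in Ioc X (2 * X), ‖G (x + H) - G x‖ₑ ^ 2
      = ∫⁻ θ in J, ∫⁻ x in Ioc X (2 * X), ‖G (x + H) - G x‖ₑ ^ 2 := by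
        rw [setLIntegral_const, hJ, mul_comm]
    _ ≤ ∫⁻ θ in J, (2 * (∫⁻ x in Ioc X (2 * X), ‖G (x + H) - G (x + θ * x)‖ₑ ^ 2) + 2 * s) :=
        setLIntegral_mono' measurableSet_Ioc hpt
    _ = 2 * (∫⁻ θ in J, ∫⁻ x in Ioc X (2 * X), ‖G (x + H) - G (x + θ * x)‖ₑ ^ 2) + 2 * s * δ := by
        rw [lintegral_add_right _ measurable_const, lintegral_const_mul' _ _ ofNat_ne_top,
          setLIntegral_const, hJ]
    _ ≤ 2 * (2 * (ENNReal.ofReal (3 * H / X - H / (3 * X)) * s)) + 2 * s * δ := by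
        gcongr
        exact setLIntegral_setLIntegral_shift_sub_dilation_le hG hH hHX hs
    _ = δ * (34 * s) := by rw [hdc]; ring

theorem intervalIntegral_shift_le_biSup_dilation (hG : StronglyMeasurable G) (hG2 : MemLp G 2)
    (hH : 0 < H) (hHX : H ≤ X) :
    ∫ x in X..(2 * X), ‖G (x + H) - G x‖ ^ 2
      ≤ 34 * ⨆ θ ∈ Icc (H / (3 * X)) (3 * H / X), ∫ u in X..(3 * X), ‖G (u + θ * u) - G u‖ ^ 2 := by
  have hX : 0 < X := hH.trans_le hHX
  set L : ℝ → ℝ≥0∞ := fun θ => ∫⁻ u in Ioc X (3 * X), ‖G (u + θ * u) - G u‖ₑ ^ 2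
  have hL : ∀ θ ∈ Icc (H / (3 * X)) (3 * H / X), L θ ≤ 4 * ∫⁻ v, ‖G v‖ₑ ^ 2 := fun θ hθ =>
    setLIntegral_dilation_sub_le_four_mul hG ((div_pos hH (by positivity)).le.trans hθ.1) _ _
  have hM : 4 * ∫⁻ v, ‖G v‖ₑ ^ 2 ≠ ∞ := mul_ne_top ofNat_ne_top hG2.lintegral_enorm_sq_ne_top
  have hmeas : ∀ φ : ℝ → ℝ, Measurable φ → AEStronglyMeasurable fun x => G (φ x) - G x :=
    fun φ hφ => ((hG.comp_measurable hφ).sub hG).aestronglyMeasurable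
  rw [intervalIntegral_norm_sq_eq_toReal (hmeas _ (by fun_prop)) (by linarith),
    iSup_congr fun θ => iSup_congr fun _ =>
      intervalIntegral_norm_sq_eq_toReal (hmeas _ (by fun_prop)) (by linarith),
    ← toReal_biSup fun θ hθ => ne_top_of_le_ne_top hM (hL θ hθ)]
  refine (toReal_mono (mul_ne_top ofNat_ne_top (ne_top_of_le_ne_top hM (iSup₂_le hL)))
    (setLIntegral_shift_le_of_dilation_le hG hH hHX fun θ hθ => le_biSup L hθ)).trans_eq ?_
  rw [toReal_mul, toReal_ofNat]

end ShiftToDilation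

lemma intervalIntegral_norm_comp_sub_sq_congr_ae {F G : ℝ → E} (h : F =ᵐ[volume] G) {φ : ℝ → ℝ}
    (hφ : Measure.QuasiMeasurePreserving φ) (a b : ℝ) :
    ∫ x in a..b, ‖F (φ x) - F x‖ ^ 2 = ∫ x in a..b, ‖G (φ x) - G x‖ ^ 2 :=
  intervalIntegral.integral_congr_ae <| by
    filter_upwards [hφ.ae_eq_comp h, h] with x hφx hx _
    simp only [Function.comp_apply] at hφx
    rw [hφx, hx]

lemma quasiMeasurePreserving_add_mul_self {θ : ℝ} (hθ : 1 + θ ≠ 0) :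
    Measure.QuasiMeasurePreserving (fun u : ℝ => u + θ * u) := by
  convert Measure.quasiMeasurePreserving_smul (volume : Measure ℝ) hθ using 2 with u
  simp only [smul_eq_mul]
  ring

end

/-- For square-integrable `F` and `0 < H ≤ X`,
`∫_X^{2X} |F(x+H) − F(x)|² dx ≪ sup_{θ ∈ [H/(3X), 3H/X]} ∫_X^{3X} |F(u+θu) − F(u)|² du`
with an absolute implied constant. -/
theorem shift_to_dilation :
    ∃ C > 0, ∀ (F : ℝ → ℂ), MemLp F 2 (volume : Measure ℝ) →
      ∀ X H : ℝ, 0 < H → H ≤ X → 0 < X →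
        (∫ x in X..(2 * X), ‖F (x + H) - F x‖ ^ 2)
          ≤ C * ⨆ θ ∈ Set.Icc (H / (3 * X)) (3 * H / X),
              ∫ u in X..(3 * X), ‖F (u + θ * u) - F u‖ ^ 2 := by
  refine ⟨34, by norm_num, fun F hF X H hH hHX hX => ?_⟩
  obtain ⟨G, hG, hFG⟩ := hF.1
  have hdil : ∀ θ ∈ Set.Icc (H / (3 * X)) (3 * H / X), 1 + θ ≠ 0 := fun θ hθ => by
    have : 0 < H / (3 * X) := by positivity
    linarith [hθ.1]
  rw [intervalIntegral_norm_comp_sub_sq_congr_ae hFG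
      (measurePreserving_add_right volume H).quasiMeasurePreserving,
    iSup_congr fun θ => iSup_congr fun hθ => intervalIntegral_norm_comp_sub_sq_congr_ae hFG
      (quasiMeasurePreserving_add_mul_self (hdil θ hθ)) _ _]
  exact intervalIntegral_shift_le_biSup_dilation hG (hF.ae_eq hFG) hH hHX
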